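/- arXiv:2311.00783 — 5 statements merged into one kernel-verified Lean document; each statement's English description precedes it below -/
import Mathlib

section
/- For λ>0, ε>0 with √λ < ε, the function h(x) = x²/2 + λ·log(1 + |x|/ε) on ℝ is α-strongly convex with α = 1 - λ/ε², i.e., for all x, y ∈ ℝ and any subgradient g of h at x, h(y) ≥ h(x) + g·(y - x) + (α/2)(y - x)². -/
/-!
Since `x² / 2 - (α / 2) x² = (λ / ε²) x² / 2`, we have `h x - (α / 2) x² = λ · ψ(|x| / ε)` with
`ψ u = u² / 2 + log (1 + u)`. On `[0, ∞)` the function `ψ` is increasing and convex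
(`ψ'' u = 1 - (1 + u)⁻² ≥ 0`), so `ψ(|x| / ε)` is convex, i.e. `h` is `α`-strongly convex. Comparing
the strong convexity inequality on the segment from `x` to `y` with the subgradient inequality and
letting the point on the segment tend to `x` gives the claim.
-/

open Set Filter Topology

section StrongConvexity

variable {E : Type*} [NormedAddCommGroup E] [NormedSpace ℝ E] {s : Set E} {m : ℝ} {f : E → ℝ}

theorem StrongConvexOn.add_sq_le_of_subgradient (hf : StrongConvexOn s m f) {x y : E}
    (hx : x ∈ s) (hy : y ∈ s) (g : E →ₗ[ℝ] ℝ) (hg : ∀ z ∈ s, f x + g (z - x) ≤ f z) :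
    f x + g (y - x) + m / 2 * ‖y - x‖ ^ 2 ≤ f y := by
  have hsegment :
      ∀ t ∈ Ioo (0 : ℝ) 1, f x + g (y - x) + (1 - t) * (m / 2 * ‖y - x‖ ^ 2) ≤ f y := by
    rintro t ⟨ht₀, ht₁⟩
    have hconv := hf.2 hy hx ht₀.le (sub_nonneg.2 ht₁.le) (add_sub_cancel t 1)
    have hsub := hg _ (hf.1 hy hx ht₀.le (sub_nonneg.2 ht₁.le) (add_sub_cancel t 1))
    have hshift : t • y + (1 - t) • x - x = t • (y - x) := by
      rw [smul_sub, sub_smul, one_smul]; abel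
    rw [hshift, map_smul, smul_eq_mul] at hsub
    simp only [smul_eq_mul] at hconv
    exact le_of_mul_le_mul_left (by linear_combination hsub + hconv) ht₀
  have hlim : Tendsto (fun t : ℝ ↦ f x + g (y - x) + (1 - t) * (m / 2 * ‖y - x‖ ^ 2)) (𝓝[>] 0)
      (𝓝 (f x + g (y - x) + (1 - 0) * (m / 2 * ‖y - x‖ ^ 2))) :=
    ((continuous_const.add ((continuous_const.sub continuous_id).mul continuous_const)).tendsto
      0).mono_left nhdsWithin_le_nhds
  simpa using le_of_tendsto hlim (eventually_of_mem (Ioo_mem_nhdsGT one_pos) hsegment)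

end StrongConvexity

theorem ConvexOn.comp_norm {E : Type*} [SeminormedAddCommGroup E] [NormedSpace ℝ E]
    {g : ℝ → ℝ} (hg : ConvexOn ℝ (Ici 0) g) (hg_mono : MonotoneOn g (Ici 0)) :
    ConvexOn ℝ univ fun x : E ↦ g ‖x‖ := by
  refine ⟨convex_univ, fun x _ y _ a b ha hb hab ↦ ?_⟩
  calc g ‖a • x + b • y‖ ≤ g (a • ‖x‖ + b • ‖y‖) :=
        hg_mono (norm_nonneg _) (hg.1 (norm_nonneg x) (norm_nonneg y) ha hb hab)
          (convexOn_univ_norm.2 trivial trivial ha hb hab)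
    _ ≤ a • g ‖x‖ + b • g ‖y‖ := hg.2 (norm_nonneg x) (norm_nonneg y) ha hb hab

noncomputable def quadLog (u : ℝ) : ℝ := u ^ 2 / 2 + Real.log (1 + u)

theorem hasDerivAt_quadLog {u : ℝ} (hu : -1 < u) :
    HasDerivAt quadLog (u + (1 + u)⁻¹) u := by
  have hlog := ((hasDerivAt_id' u).const_add 1).log (by linarith : (0 : ℝ) < 1 + u).ne'
  exact (((hasDerivAt_pow 2 u).div_const 2).add hlog).congr_deriv (by norm_num)

theorem hasDerivAt_deriv_quadLog {u : ℝ} (hu : -1 < u) :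
    HasDerivAt (fun v ↦ v + (1 + v)⁻¹) (1 - ((1 + u) ^ 2)⁻¹) u := by
  have hinv := ((hasDerivAt_id' u).const_add 1).inv (by linarith : (0 : ℝ) < 1 + u).ne'
  exact ((hasDerivAt_id' u).add hinv).congr_deriv (by ring)

theorem convexOn_quadLog : ConvexOn ℝ (Ici 0) quadLog := by
  have hpos : ∀ u ∈ Ici (0 : ℝ), -1 < u := fun u hu ↦ by linarith [mem_Ici.1 hu]
  refine convexOn_of_hasDerivWithinAt2_nonneg (convex_Ici 0)
    (fun u hu ↦ (hasDerivAt_quadLog (hpos u hu)).continuousAt.continuousWithinAt)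
    (fun u hu ↦ (hasDerivAt_quadLog (hpos u (interior_subset hu))).hasDerivWithinAt)
    (fun u hu ↦ (hasDerivAt_deriv_quadLog (hpos u (interior_subset hu))).hasDerivWithinAt)
    fun u hu ↦ ?_
  rw [interior_Ici] at hu
  have : 1 ≤ (1 + u) ^ 2 := one_le_pow₀ (by linarith [mem_Ioi.1 hu])
  linarith [inv_le_one_of_one_le₀ this]

theorem monotoneOn_quadLog : MonotoneOn quadLog (Ici 0) := by
  intro a ha b _ hab
  have ha : 0 ≤ a := ha
  unfold quadLog
  gcongr

theorem stmt_0_general (lam eps : ℝ) (hlam : 0 < lam) (heps : 0 < eps)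
    (h : ℝ → ℝ) (hdef : ∀ x, h x = x ^ 2 / 2 + lam * Real.log (1 + |x| / eps)) :
    ∀ x y g : ℝ, (∀ z, h z ≥ h x + g * (z - x)) →
      h y ≥ h x + g * (y - x) + ((1 - lam / eps ^ 2) / 2) * (y - x) ^ 2 := by
  intro x y g hg
  have hconv : ConvexOn ℝ univ fun z ↦ h z - (1 - lam / eps ^ 2) / 2 * ‖z‖ ^ 2 := by
    refine (((convexOn_quadLog.comp_norm monotoneOn_quadLog).comp_linearMap
      (eps⁻¹ • LinearMap.id)).smul hlam.le).congr fun z _ ↦ ?_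
    simp only [Function.comp_apply, LinearMap.smul_apply, LinearMap.id_apply, smul_eq_mul,
      quadLog, hdef, Real.norm_eq_abs, abs_mul, abs_inv, abs_of_pos heps, sq_abs]
    field_simp
    ring
  have := (strongConvexOn_iff_convex.2 hconv).add_sq_le_of_subgradient (mem_univ x) (mem_univ y)
    (LinearMap.mul ℝ ℝ g) fun z _ ↦ hg z
  simpa [Real.norm_eq_abs, sq_abs] using this

/-- For λ>0, ε>0 with √λ < ε, the function
h(x) = x²/2 + λ·log(1 + |x|/ε) is α-strongly convex with α = 1 - λ/ε²:
for all x, y and any subgradient g of h at x,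
h(y) ≥ h(x) + g·(y-x) + (α/2)(y-x)². -/
theorem stmt_0 (lam eps : ℝ) (hlam : 0 < lam) (heps : 0 < eps)
    (hle : Real.sqrt lam < eps)
    (h : ℝ → ℝ) (hdef : ∀ x, h x = x ^ 2 / 2 + lam * Real.log (1 + |x| / eps)) :
    ∀ x y g : ℝ, (∀ z, h z ≥ h x + g * (z - x)) →
      h y ≥ h x + g * (y - x) + ((1 - lam / eps ^ 2) / 2) * (y - x) ^ 2 :=
  stmt_0_general lam eps hlam heps h hdef
end

section
/- Let λ, ε > 0 and z ∈ ℝ with (|z| + ε)² ≥ 4λ. Then every minimizer of the function x ↦ (1/2)(x - |z|)² + λ·log(1 + x/ε) over x ≥ 0 belongs to the set {0, z̃₁, z̃₂}, where z̃₁ = max{0, ((|z| - ε) + √((|z|+ε)² - 4λ))/2} and z̃₂ = max{0, ((|z| - ε) - √((|z|+ε)² - 4λ))/2}. -/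
/-! A positive minimizer is an interior critical point of `F`, and clearing the denominator in
`F'(x) = x - |z| + λ / (x + ε) = 0` gives the quadratic `(x - |z|)(x + ε) + λ = 0`, whose roots are
the two candidates; being positive, `x` coincides with its projection onto `[0, ∞)`. -/

open Real

theorem hasDerivAt_half_sq_sub_add_mul_log {lam eps a x : ℝ} (heps : eps ≠ 0)
    (hx : x + eps ≠ 0) :
    HasDerivAt (fun y => (1 / 2) * (y - a) ^ 2 + lam * log (1 + y / eps))
      ((x - a) + lam / (x + eps)) x := by
  have hlog : 1 + x / eps ≠ 0 := by
    rwa [one_add_div heps, div_ne_zero_iff, add_comm, and_iff_left heps]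
  have hquad : HasDerivAt (fun y => (1 / 2) * (y - a) ^ 2) (x - a) x := by
    simpa using (((hasDerivAt_id x).sub_const a).pow 2).const_mul (1 / 2 : ℝ)
  have hinner : HasDerivAt (fun y => 1 + y / eps) (1 / eps) x := by
    simpa using ((hasDerivAt_id x).div_const eps).const_add 1
  refine (hquad.add ((hinner.log hlog).const_mul lam)).congr_deriv ?_
  rw [one_add_div heps, add_comm eps x]
  field_simp

theorem eq_quadratic_root_of_mul_add_eq_zero {a eps lam x : ℝ}
    (hdisc : 4 * lam ≤ (a + eps) ^ 2) (h : (x - a) * (x + eps) + lam = 0) :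
    x = ((a - eps) + √((a + eps) ^ 2 - 4 * lam)) / 2 ∨
      x = ((a - eps) - √((a + eps) ^ 2 - 4 * lam)) / 2 := by
  have hsq : √((a + eps) ^ 2 - 4 * lam) ^ 2 = (a + eps) ^ 2 - 4 * lam :=
    sq_sqrt (by linarith)
  have hfactor : (x - ((a - eps) + √((a + eps) ^ 2 - 4 * lam)) / 2) *
      (x - ((a - eps) - √((a + eps) ^ 2 - 4 * lam)) / 2) = 0 := by
    linear_combination h - (1 / 4) * hsq
  rcases mul_eq_zero.mp hfactor with h | h
  · exact Or.inl (by linarith)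
  · exact Or.inr (by linarith)

theorem stmt_4_general (lam eps z : ℝ) (heps : 0 < eps)
    (hcond : (|z| + eps) ^ 2 ≥ 4 * lam)
    (x : ℝ) (hx : 0 ≤ x)
    (hmin : ∀ y, 0 ≤ y →
      (1 / 2) * (x - |z|) ^ 2 + lam * Real.log (1 + x / eps) ≤
        (1 / 2) * (y - |z|) ^ 2 + lam * Real.log (1 + y / eps)) :
    x = 0 ∨
      x = max 0 (((|z| - eps) + Real.sqrt ((|z| + eps) ^ 2 - 4 * lam)) / 2) ∨
      x = max 0 (((|z| - eps) - Real.sqrt ((|z| + eps) ^ 2 - 4 * lam)) / 2) := by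
  rcases hx.eq_or_lt with rfl | hxpos
  · exact Or.inl rfl
  have hxeps : 0 < x + eps := by linarith
  have hlocal : IsLocalMin (fun y => (1 / 2) * (y - |z|) ^ 2 + lam * log (1 + y / eps)) x :=
    Filter.mem_of_superset (Ioi_mem_nhds hxpos) fun y hy => hmin y (le_of_lt hy)
  have hcrit : (x - |z|) + lam / (x + eps) = 0 :=
    hlocal.hasDerivAt_eq_zero (hasDerivAt_half_sq_sub_add_mul_log heps.ne' hxeps.ne')
  have hquad : (x - |z|) * (x + eps) + lam = 0 := by
    field_simp at hcrit
    linarith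
  right
  rcases eq_quadratic_root_of_mul_add_eq_zero hcond hquad with hroot | hroot
  · exact Or.inl (by rw [max_eq_right (hroot ▸ hxpos.le)]; exact hroot)
  · exact Or.inr (by rw [max_eq_right (hroot ▸ hxpos.le)]; exact hroot)

/-- For λ, ε > 0, z ∈ ℝ with (|z| + ε)² ≥ 4λ, every minimizer of
F(x) = (1/2)(x - |z|)² + λ·log(1 + x/ε) over x ≥ 0 lies in {0, z̃₁, z̃₂}. -/
theorem stmt_4 (lam eps z : ℝ) (hlam : 0 < lam) (heps : 0 < eps)
    (hcond : (|z| + eps) ^ 2 ≥ 4 * lam)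
    (x : ℝ) (hx : 0 ≤ x)
    (hmin : ∀ y, 0 ≤ y →
      (1 / 2) * (x - |z|) ^ 2 + lam * Real.log (1 + x / eps) ≤
        (1 / 2) * (y - |z|) ^ 2 + lam * Real.log (1 + y / eps)) :
    x = 0 ∨
      x = max 0 (((|z| - eps) + Real.sqrt ((|z| + eps) ^ 2 - 4 * lam)) / 2) ∨
      x = max 0 (((|z| - eps) - Real.sqrt ((|z| + eps) ^ 2 - 4 * lam)) / 2) :=
  stmt_4_general lam eps z heps hcond x hx hmin
end

section
/- Let λ, ε > 0 with λ < ε², and let f(x) = Σᵢ [λ·log(1 + |xᵢ|/ε) + xᵢ²/2] on ℝⁿ. Then f is (1 - λ/ε²)-strongly convex on ℝⁿ. -/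
/-!
Subtracting `(1 - λ/ε²)/2 · ‖x‖²` from `f` leaves `λ Σᵢ ψ(|xᵢ|)` with
`ψ(u) = log (1 + u/ε) + u²/(2ε²)`. On `[0, ∞)` the derivative `1/(ε + u) + u/ε²` of `ψ` is
nondecreasing, because the logarithm bends down with curvature at most `1/ε²`; being also
nondecreasing there, `ψ` stays convex after composition with `|·|`. Hence `f` is
`(1 - λ/ε²)`-strongly convex, and the subgradient inequality follows by comparing chord and
tangent on the segment `[x, y]` near `x`.
-/

open scoped RealInnerProductSpace BigOperators
open Set Filter Topology Real

theorem ConvexOn.sum {𝕜 E β ι : Type*} [Semiring 𝕜] [PartialOrder 𝕜] [AddCommMonoid E]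
    [AddCommMonoid β] [PartialOrder β] [IsOrderedAddMonoid β] [SMul 𝕜 E] [Module 𝕜 β]
    {s : Set E} (hs : Convex 𝕜 s) (t : Finset ι) {f : ι → E → β}
    (hf : ∀ i ∈ t, ConvexOn 𝕜 s (f i)) : ConvexOn 𝕜 s fun x ↦ ∑ i ∈ t, f i x := by
  classical
  induction t using Finset.induction_on with
  | empty => simpa only [Finset.sum_empty] using convexOn_const (0 : β) hs
  | insert i t hi ih =>
    simp only [Finset.sum_insert hi]
    exact (hf i (t.mem_insert_self i)).add (ih fun j hj ↦ hf j (Finset.mem_insert_of_mem hj))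

section LogSumPenalty

variable {ε : ℝ}

theorem hasDerivAt_log_one_add_div_add_sq (hε : 0 < ε) {u : ℝ} (hu : 0 ≤ u) :
    HasDerivAt (fun u ↦ log (1 + u / ε) + u ^ 2 / (2 * ε ^ 2)) (1 / (ε + u) + u / ε ^ 2) u := by
  have hlog : HasDerivAt (fun u ↦ log (1 + u / ε)) (1 / ε / (1 + u / ε)) u :=
    (((hasDerivAt_id u).div_const ε).const_add 1).log (by positivity)
  refine (hlog.add ((hasDerivAt_pow 2 u).div_const (2 * ε ^ 2))).congr_deriv ?_
  have : ε + u ≠ 0 := by positivity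
  field_simp
  ring

theorem convexOn_log_one_add_div_add_sq (hε : 0 < ε) :
    ConvexOn ℝ (Ici 0) fun u ↦ log (1 + u / ε) + u ^ 2 / (2 * ε ^ 2) := by
  have hderiv (u : ℝ) (hu : u ∈ Ioi 0) := hasDerivAt_log_one_add_div_add_sq hε (le_of_lt hu)
  refine MonotoneOn.convexOn_of_deriv (convex_Ici 0) ?_ ?_ ?_
  · refine ContinuousOn.add (ContinuousOn.log (by fun_prop) fun u hu ↦ ?_) (by fun_prop)
    have : (0 : ℝ) ≤ u := hu
    positivity
  · rw [interior_Ici]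
    exact fun u hu ↦ (hderiv u hu).differentiableAt.differentiableWithinAt
  · rw [interior_Ici]
    intro a ha b hb hab
    rw [(hderiv a ha).deriv, (hderiv b hb).deriv]
    have ha : (0 : ℝ) < a := ha
    have hb : (0 : ℝ) < b := hb
    have hεa : 0 < ε + a := by positivity
    have hεb : 0 < ε + b := by positivity
    have : 1 / (ε + a) - 1 / (ε + b) ≤ (b - a) / ε ^ 2 := by
      rw [div_sub_div _ _ hεa.ne' hεb.ne', div_le_div_iff₀ (by positivity) (by positivity)]
      nlinarith [mul_nonneg (sub_nonneg.2 hab) (by positivity : 0 ≤ ε * (a + b) + a * b)]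
    have : (b - a) / ε ^ 2 = b / ε ^ 2 - a / ε ^ 2 := sub_div _ _ _
    linarith

theorem monotoneOn_log_one_add_div_add_sq (hε : 0 < ε) :
    MonotoneOn (fun u ↦ log (1 + u / ε) + u ^ 2 / (2 * ε ^ 2)) (Ici 0) := by
  intro a ha b _ hab
  have ha : (0 : ℝ) ≤ a := ha
  dsimp only
  gcongr

theorem convexOn_log_one_add_abs_div_add_sq (hε : 0 < ε) :
    ConvexOn ℝ univ fun u : ℝ ↦ log (1 + |u| / ε) + u ^ 2 / (2 * ε ^ 2) := by
  have habs : (fun u : ℝ ↦ |u|) '' univ = Ici 0 := by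
    ext u
    exact ⟨fun ⟨v, _, hv⟩ ↦ hv ▸ abs_nonneg v, fun hu ↦ ⟨u, trivial, abs_of_nonneg hu⟩⟩
  have := (habs ▸ convexOn_log_one_add_div_add_sq hε).comp (convexOn_norm convex_univ)
    (habs ▸ monotoneOn_log_one_add_div_add_sq hε)
  simpa only [Function.comp_def, Real.norm_eq_abs, sq_abs] using this

end LogSumPenalty

section StrongConvexity

variable {E : Type*} [NormedAddCommGroup E] [InnerProductSpace ℝ E] {s : Set E} {m : ℝ}
  {f : E → ℝ} {x y g : E}

theorem StrongConvexOn.add_inner_add_sq_le (hf : StrongConvexOn s m f) (hx : x ∈ s) (hy : y ∈ s)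
    (hg : ∀ z ∈ s, f x + ⟪g, z - x⟫ ≤ f z) :
    f x + ⟪g, y - x⟫ + m / 2 * ‖y - x‖ ^ 2 ≤ f y := by
  have hchord : ∀ t ∈ Ioo (0 : ℝ) 1, f x + ⟪g, y - x⟫ + (1 - t) * (m / 2 * ‖y - x‖ ^ 2) ≤ f y := by
    rintro t ⟨ht0, ht1⟩
    have hsub := hg _ (hf.1 hx hy (sub_nonneg.2 ht1.le) ht0.le (sub_add_cancel 1 t))
    have hconv := hf.2 hx hy (sub_nonneg.2 ht1.le) ht0.le (sub_add_cancel 1 t)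
    rw [show (1 - t) • x + t • y - x = t • (y - x) by module, real_inner_smul_right] at hsub
    simp only [smul_eq_mul, norm_sub_rev x y] at hconv
    have : t * (⟪g, y - x⟫ + (1 - t) * (m / 2 * ‖y - x‖ ^ 2)) ≤ t * (f y - f x) := by linarith
    linarith [le_of_mul_le_mul_left this ht0]
  have hlim : Tendsto (fun t ↦ f x + ⟪g, y - x⟫ + (1 - t) * (m / 2 * ‖y - x‖ ^ 2)) (𝓝[>] 0)
      (𝓝 (f x + ⟪g, y - x⟫ + (1 - 0) * (m / 2 * ‖y - x‖ ^ 2))) :=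
    (Continuous.tendsto (by fun_prop) 0).mono_left nhdsWithin_le_nhds
  simpa only [sub_zero, one_mul] using
    le_of_tendsto hlim (eventually_of_mem (Ioo_mem_nhdsGT one_pos) hchord)

end StrongConvexity

theorem stmt_5_general (n : ℕ) (lam eps : ℝ) (hlam : 0 < lam) (heps : 0 < eps)
    (f : EuclideanSpace ℝ (Fin n) → ℝ)
    (hdef : ∀ x, f x = ∑ i, (lam * Real.log (1 + |x i| / eps) + (x i) ^ 2 / 2)) :
    ∀ x y g : EuclideanSpace ℝ (Fin n),
      (∀ z, f z ≥ f x + ⟪g, z - x⟫) →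
        f y ≥ f x + ⟪g, y - x⟫ + ((1 - lam / eps ^ 2) / 2) * ‖y - x‖ ^ 2 := by
  have hf : StrongConvexOn univ (1 - lam / eps ^ 2) f := by
    have hcoord (i : Fin n) := (convexOn_log_one_add_abs_div_add_sq heps).comp_linearMap
      (EuclideanSpace.proj i : EuclideanSpace ℝ (Fin n) →L[ℝ] ℝ).toLinearMap
    rw [strongConvexOn_iff_convex]
    refine ((ConvexOn.sum convex_univ Finset.univ fun i _ ↦ hcoord i).smul hlam.le).congr
      fun x _ ↦ ?_
    simp only [hdef, EuclideanSpace.real_norm_sq_eq, Function.comp_apply, smul_eq_mul,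
      ContinuousLinearMap.coe_coe, PiLp.proj_apply, Finset.mul_sum, ← Finset.sum_sub_distrib]
    refine Finset.sum_congr rfl fun i _ ↦ ?_
    field_simp
    ring
  intro x y g hg
  exact hf.add_inner_add_sq_le (mem_univ x) (mem_univ y) fun z _ ↦ hg z

/-- For λ, ε > 0 with λ < ε², the function
f(x) = Σᵢ [λ·log(1 + |xᵢ|/ε) + xᵢ²/2] is (1 - λ/ε²)-strongly convex on ℝⁿ. -/
theorem stmt_5 (n : ℕ) (lam eps : ℝ) (hlam : 0 < lam) (heps : 0 < eps)
    (hle : lam < eps ^ 2)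
    (f : EuclideanSpace ℝ (Fin n) → ℝ)
    (hdef : ∀ x, f x = ∑ i, (lam * Real.log (1 + |x i| / eps) + (x i) ^ 2 / 2)) :
    ∀ x y g : EuclideanSpace ℝ (Fin n),
      (∀ z, f z ≥ f x + ⟪g, z - x⟫) →
        f y ≥ f x + ⟪g, y - x⟫ + ((1 - lam / eps ^ 2) / 2) * ‖y - x‖ ^ 2 :=
  stmt_5_general n lam eps hlam heps f hdef
end

section
/- Let f: ℝⁿ → ℝ be α-strongly convex and differentiable with convex conjugate f*. Given z̄ ∈ ℝⁿ, set x̄ = ∇f*(z̄). Let a ∈ ℝⁿ be nonzero, b ∈ ℝ, t > 0, and let z = z̄ + (t/‖a‖²)·a·(b - ⟨a, x̄⟩) and x = ∇f*(z). Then for any h ∈ ℝⁿ with ⟨a, h⟩ = b, the Bregman distances satisfy D_{f,z}(x, h) ≤ D_{f,z̄}(x̄, h) - (t/‖a‖²)(1 - t/(2α))·(b - ⟨a, x̄⟩)². -/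
open scoped RealInnerProductSpace

set_option maxHeartbeats 1600000 in
/-- One-step Bregman decay for the regularized Kaczmarz update
(vector, single-row, ρ = 1 case of Proposition 1).  Here `gradfstar` plays the
role of ∇f*, characterized by the property that z is a subgradient of f at
∇f*(z); the Bregman distance is D_{f,z}(x,h) = f(h) - f(x) - ⟨z, h - x⟩. -/
theorem stmt_7 (n : ℕ) (f : EuclideanSpace ℝ (Fin n) → ℝ) (α t : ℝ)
    (hα : 0 < α) (ht : 0 < t)
    (hsc : ∀ x y g : EuclideanSpace ℝ (Fin n),
      (∀ u, f u ≥ f x + ⟪g, u - x⟫) →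
        f y ≥ f x + ⟪g, y - x⟫ + (α / 2) * ‖y - x‖ ^ 2)
    (gradfstar : EuclideanSpace ℝ (Fin n) → EuclideanSpace ℝ (Fin n))
    (hgrad : ∀ z y, f y ≥ f (gradfstar z) + ⟪z, y - gradfstar z⟫)
    (a : EuclideanSpace ℝ (Fin n)) (ha : a ≠ 0) (b : ℝ)
    (zbar xbar z x h : EuclideanSpace ℝ (Fin n))
    (hxbar : xbar = gradfstar zbar)
    (hz : z = zbar + (t / ‖a‖ ^ 2 * (b - ⟪a, xbar⟫)) • a)
    (hx : x = gradfstar z)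
    (hh : ⟪a, h⟫ = b) :
    f h - f x - ⟪z, h - x⟫ ≤
      f h - f xbar - ⟪zbar, h - xbar⟫ -
        (t / ‖a‖ ^ 2) * (1 - t / (2 * α)) * (b - ⟪a, xbar⟫) ^ 2 := by
  have hna : (0:ℝ) < ‖a‖ := norm_pos_iff.mpr ha
  set na := ‖a‖ with hnadef
  set r := ⟪a, xbar⟫ with hr
  set β := t / na ^ 2 * (b - r) with hβ
  have hsub : ∀ u, f u ≥ f xbar + ⟪zbar, u - xbar⟫ := by
    intro u; rw [hxbar]; exact hgrad zbar u
  have F1 : f x ≥ f xbar + ⟪zbar, x - xbar⟫ + (α / 2) * ‖x - xbar‖ ^ 2 :=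
    hsc xbar x zbar hsub
  set v := ‖x - xbar‖ with hv
  set w := ⟪a, x - xbar⟫ with hw
  have F5 : |w| ≤ na * v := by
    simpa [hw, hv] using abs_real_inner_le_norm a (x - xbar)
  have F2 : ⟪z, h - x⟫ = ⟪zbar, h - x⟫ + β * ⟪a, h - x⟫ := by
    rw [hz]; rw [inner_add_left, real_inner_smul_left]
  have F3 : ⟪a, h - x⟫ = b - r - w := by
    rw [inner_sub_right, hh]
    have : ⟪a, x⟫ = r + w := by rw [hw, inner_sub_right]; ring
    rw [this]; ring
  have F6 : ⟪zbar, h - xbar⟫ = ⟪zbar, h - x⟫ + ⟪zbar, x - xbar⟫ := by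
    rw [← inner_add_right]; congr 1; abel
  have hβs : β * na ^ 2 = t * (b - r) := by
    rw [hβ]; field_simp
  have key : β ^ 2 * na ^ 2 = β * (t * (b - r)) := by rw [← hβs]; ring
  have hceq : (t / na ^ 2) * (1 - t / (2 * α)) * (b - r) ^ 2
      = β * (1 - t / (2 * α)) * (b - r) := by rw [hβ]; ring
  have hc2 : β * (1 - t / (2 * α)) * (b - r) * (2 * α) = β * (b - r) * (2 * α - t) := by
    field_simp
  have hbw : β * w ≤ |β| * (na * v) := by
    calc β * w ≤ |β * w| := le_abs_self _
    _ = |β| * |w| := abs_mul _ _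
    _ ≤ |β| * (na * v) := by
        exact mul_le_mul_of_nonneg_left F5 (abs_nonneg β)
  have h2 : 2 * α * (β * w) ≤ β ^ 2 * na ^ 2 + α ^ 2 * v ^ 2 := by
    nlinarith [sq_nonneg (|β| * na - α * v), sq_abs β, hbw, hα, abs_nonneg β,
      norm_nonneg (x - xbar)]
  have h4 : 2 * α * (β * w) ≤ α ^ 2 * v ^ 2 + t * (β * (b - r)) := by
    have : β ^ 2 * na ^ 2 = t * (β * (b - r)) := by rw [key]; ring
    linarith [h2, this]
  have h3 : β * w ≤ α / 2 * v ^ 2 + β * (b - r) - β * (1 - t / (2 * α)) * (b - r) := by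
    have hid : (α / 2 * v ^ 2 + β * (b - r) - β * (1 - t / (2 * α)) * (b - r)) * (2 * α)
        = α ^ 2 * v ^ 2 + t * (β * (b - r)) := by
      field_simp
      ring
    have h5 : (β * w) * (2 * α) ≤
        (α / 2 * v ^ 2 + β * (b - r) - β * (1 - t / (2 * α)) * (b - r)) * (2 * α) := by
      rw [hid]; linarith [h4]
    exact le_of_mul_le_mul_right h5 (by positivity)
  rw [F2, F3, F6, hceq]
  linarith [F1, h3]
end

section
/- Let λ, ε > 0 with λ < ε², let f(x) = Σᵢ [λ log(1 + |xᵢ|/ε) + xᵢ²/2] on ℝⁿ, and suppose x* ∈ ∂f(x). Then for any x̂ ∈ ℝⁿ, ‖x - x̂‖² ≤ (2ε²/(ε² - λ)) · D_{f,x*}(x, x̂), where D_{f,x*}(x, x̂) = f(x̂) - f(x) - ⟨x*, x̂ - x⟩. -/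
/-!
With `ψ u = log (1 + |u|) + u² / 2` and `α = 1 - λ/ε²`, the objective splits as
`f x = λ ∑ᵢ ψ (xᵢ / ε) + (α / 2) ‖x‖²`. The function `ψ` is convex: it is `r ↦ log (1 + r) + r² / 2`,
increasing with second derivative `1 - (1 + r)⁻² ≥ 0` on `r ≥ 0`, composed with `|u|`. So `f` is
`α`-strongly convex. On the segment `x + t (x̂ - x)`, strong convexity bounds `f` from above and
the subgradient inequality bounds it from below; dividing by `t` and letting `t → 0⁺` gives
`f x̂ ≥ f x + ⟪x*, x̂ - x⟫ + (α / 2) ‖x̂ - x‖²`.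
-/

open scoped RealInnerProductSpace

open Set Filter Topology Real
lemma hasDerivAt_log_one_add_add_sq_div_two {u : ℝ} (hu : 1 + u ≠ 0) :
    HasDerivAt (fun u : ℝ => log (1 + u) + u ^ 2 / 2) ((1 + u)⁻¹ + u) u := by
  refine ((((hasDerivAt_id u).const_add 1).log hu).add
    ((hasDerivAt_pow 2 u).div_const 2)).congr_deriv ?_
  simp only [id, one_div]
  ring

lemma hasDerivAt_inv_one_add_add {u : ℝ} (hu : 1 + u ≠ 0) :
    HasDerivAt (fun u : ℝ => (1 + u)⁻¹ + u) (1 - ((1 + u) ^ 2)⁻¹) u := by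
  refine ((((hasDerivAt_id u).const_add 1).inv hu).add (hasDerivAt_id u)).congr_deriv ?_
  simp only [id]
  ring

lemma convexOn_log_one_add_add_sq_div_two :
    ConvexOn ℝ (Ici 0) (fun u : ℝ => log (1 + u) + u ^ 2 / 2) := by
  have hne {u : ℝ} (hu : u ∈ interior (Ici (0 : ℝ))) : 1 + u ≠ 0 := by
    rw [interior_Ici, mem_Ioi] at hu
    positivity
  refine convexOn_of_hasDerivWithinAt2_nonneg (convex_Ici 0) ?_
    (fun u hu => (hasDerivAt_log_one_add_add_sq_div_two (hne hu)).hasDerivWithinAt)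
    (fun u hu => (hasDerivAt_inv_one_add_add (hne hu)).hasDerivWithinAt) ?_
  · intro u (hu : 0 ≤ u)
    exact (hasDerivAt_log_one_add_add_sq_div_two (by positivity)).continuousAt.continuousWithinAt
  · intro u hu
    rw [interior_Ici, mem_Ioi] at hu
    have : 1 ≤ (1 + u) ^ 2 := by nlinarith
    simpa using inv_le_one_of_one_le₀ this

lemma monotoneOn_log_one_add_add_sq_div_two :
    MonotoneOn (fun u : ℝ => log (1 + u) + u ^ 2 / 2) (Ici 0) := by
  intro u (hu : 0 ≤ u) v (hv : 0 ≤ v) huv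
  dsimp only
  gcongr

lemma convexOn_log_one_add_abs_add_sq_div_two :
    ConvexOn ℝ univ (fun u : ℝ => log (1 + |u|) + u ^ 2 / 2) := by
  have himage : (fun u : ℝ => |u|) '' univ = Ici 0 := by
    ext r
    simp only [image_univ, mem_range, mem_Ici]
    exact ⟨fun ⟨u, hu⟩ => hu ▸ abs_nonneg u, fun hr => ⟨r, abs_of_nonneg hr⟩⟩
  have h := ConvexOn.comp (f := fun u : ℝ => |u|)
    (by rw [himage]; exact convexOn_log_one_add_add_sq_div_two) convexOn_univ_norm
    (by rw [himage]; exact monotoneOn_log_one_add_add_sq_div_two)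
  simpa only [Function.comp_def, sq_abs] using h

lemma ConvexOn.finset_sum {E ι : Type*} [AddCommGroup E] [Module ℝ E] {s : Set E}
    {f : ι → E → ℝ} (t : Finset ι) (hs : Convex ℝ s) (hf : ∀ i ∈ t, ConvexOn ℝ s (f i)) :
    ConvexOn ℝ s (fun x => ∑ i ∈ t, f i x) := by
  simpa only [← Finset.sum_apply] using
    Finset.sum_induction f (ConvexOn ℝ s) (fun _ _ => ConvexOn.add) (convexOn_const 0 hs) hf

lemma StrongConvexOn.add_inner_add_sq_le_of_subgradient {E : Type*} [NormedAddCommGroup E]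
    [InnerProductSpace ℝ E] {s : Set E} {m : ℝ} {f : E → ℝ} (hf : StrongConvexOn s m f)
    {x g y : E} (hx : x ∈ s) (hy : y ∈ s) (hg : ∀ z ∈ s, f x + ⟪g, z - x⟫ ≤ f z) :
    f x + ⟪g, y - x⟫ + m / 2 * ‖y - x‖ ^ 2 ≤ f y := by
  have hsegment : ∀ t ∈ Ioo (0 : ℝ) 1,
      (1 - t) * (m / 2 * ‖y - x‖ ^ 2) ≤ f y - f x - ⟪g, y - x⟫ := by
    rintro t ⟨ht₀, ht₁⟩
    have hconv := hf.2 hx hy (sub_nonneg.2 ht₁.le) ht₀.le (sub_add_cancel 1 t)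
    have hsub := hg _ (hf.1 hx hy (sub_nonneg.2 ht₁.le) ht₀.le (sub_add_cancel 1 t))
    have hdir : (1 - t) • x + t • y - x = t • (y - x) := by module
    rw [hdir, real_inner_smul_right] at hsub
    rw [smul_eq_mul, smul_eq_mul, norm_sub_rev] at hconv
    beta_reduce at hconv
    have : t * ((1 - t) * (m / 2 * ‖y - x‖ ^ 2)) ≤ t * (f y - f x - ⟪g, y - x⟫) := by nlinarith
    exact le_of_mul_le_mul_left this ht₀
  have hlim : Tendsto (fun t : ℝ => (1 - t) * (m / 2 * ‖y - x‖ ^ 2)) (𝓝[>] 0)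
      (𝓝 (m / 2 * ‖y - x‖ ^ 2)) := by
    have h := ((continuous_const.sub continuous_id).mul continuous_const).tendsto (0 : ℝ)
      (f := fun t : ℝ => (1 - t) * (m / 2 * ‖y - x‖ ^ 2))
    simpa using h.mono_left nhdsWithin_le_nhds
  have := le_of_tendsto hlim (eventually_of_mem (Ioo_mem_nhdsGT one_pos) hsegment)
  linarith

lemma strongConvexOn_sum_log_one_add_abs_div_add_sq {ι : Type*} [Fintype ι] {lam eps : ℝ}
    (hlam : 0 ≤ lam) (heps : 0 < eps) :
    StrongConvexOn univ (1 - lam / eps ^ 2)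
      (fun x : EuclideanSpace ℝ ι => ∑ i, (lam * log (1 + |x i| / eps) + x i ^ 2 / 2)) := by
  rw [strongConvexOn_iff_convex]
  have hsplit : (fun x : EuclideanSpace ℝ ι =>
      ∑ i, (lam * log (1 + |x i| / eps) + x i ^ 2 / 2) - (1 - lam / eps ^ 2) / 2 * ‖x‖ ^ 2) =
      fun x => ∑ i, lam • (fun u : ℝ => log (1 + |u|) + u ^ 2 / 2)
        ((eps⁻¹ • EuclideanSpace.projₗ i) x) := by
    funext x
    rw [EuclideanSpace.real_norm_sq_eq, Finset.mul_sum, ← Finset.sum_sub_distrib]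
    refine Finset.sum_congr rfl fun i _ => ?_
    simp only [LinearMap.smul_apply, PiLp.projₗ_apply, smul_eq_mul, abs_mul, abs_inv,
      abs_of_pos heps]
    field_simp
    ring
  rw [hsplit]
  exact ConvexOn.finset_sum _ convex_univ fun i _ =>
    (convexOn_log_one_add_abs_add_sq_div_two.comp_linearMap _).smul hlam

/-- For the log-sum regularized objective
f(x) = Σᵢ [λ log(1 + |xᵢ|/ε) + xᵢ²/2] with λ < ε², and x* ∈ ∂f(x),
‖x - x̂‖² ≤ (2ε²/(ε² - λ)) · (f(x̂) - f(x) - ⟨x*, x̂ - x⟩). -/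
theorem stmt_9 (n : ℕ) (lam eps : ℝ) (hlam : 0 < lam) (heps : 0 < eps)
    (hle : lam < eps ^ 2)
    (f : EuclideanSpace ℝ (Fin n) → ℝ)
    (hdef : ∀ x, f x = ∑ i, (lam * Real.log (1 + |x i| / eps) + (x i) ^ 2 / 2))
    (x xstar xhat : EuclideanSpace ℝ (Fin n))
    (hsub : ∀ z, f z ≥ f x + ⟪xstar, z - x⟫) :
    ‖x - xhat‖ ^ 2 ≤
      (2 * eps ^ 2 / (eps ^ 2 - lam)) * (f xhat - f x - ⟪xstar, xhat - x⟫) := by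
  have hconvex : StrongConvexOn univ ((eps ^ 2 - lam) / eps ^ 2) f := by
    rw [← one_sub_div (by positivity), funext hdef]
    exact strongConvexOn_sum_log_one_add_abs_div_add_sq hlam.le heps
  have hbound := hconvex.add_inner_add_sq_le_of_subgradient (mem_univ x) (mem_univ xhat)
    fun z _ => hsub z
  replace hbound : (eps ^ 2 - lam) / eps ^ 2 / 2 * ‖xhat - x‖ ^ 2 ≤
      f xhat - f x - ⟪xstar, xhat - x⟫ := by linarith
  rw [div_div, div_mul_eq_mul_div, div_le_iff₀ (by positivity)] at hbound
  rw [norm_sub_rev, div_mul_eq_mul_div, le_div_iff₀ (sub_pos.2 hle)]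
  linarith
end
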